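/- Let ε > 0 and let n, k ≥ 1 be integers with k ≥ √n and k ≥ π·√n / ε. Then for any unit vectors u, v ∈ ℝⁿ (‖u‖₂ = ‖v‖₂ = 1) lying in the same hypercube cell of the k-partition of [−1,1]ⁿ, the angle between u and v satisfies ∠(u,v) ≤ ε. (Hence the maximum central angular variation θ_max within any single cell tends to 0 as k grows.) -/
import Mathlib


open scoped BigOperators

/-- Euclidean norm on `Fin n → ℝ`. -/
noncomputable def norm2 {n : ℕ} (v : Fin n → ℝ) : ℝ := Real.sqrt (∑ i, v i ^ 2)

/-- The angle between two vectors: `arccos(⟨u,v⟩ / (‖u‖₂ ‖v‖₂))`. -/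
noncomputable def vangle {n : ℕ} (u v : Fin n → ℝ) : ℝ :=
  Real.arccos ((∑ i, u i * v i) / (norm2 u * norm2 v))

/-- `u` and `v` lie in the same hypercube cell of the `k`-partition of `[-1,1]ⁿ`. -/
def sameCell (n k : ℕ) (u v : Fin n → ℝ) : Prop :=
  ∀ i : Fin n, ∃ c : ℕ, c < k ∧
    u i ∈ Set.Icc (-1 + 2 * (c : ℝ) / k) (-1 + 2 * ((c : ℝ) + 1) / k) ∧
    v i ∈ Set.Icc (-1 + 2 * (c : ℝ) / k) (-1 + 2 * ((c : ℝ) + 1) / k)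

lemma cos_bound_aux {p c S e : ℝ} (hp : 0 < p)
    (h1 : p ^ 2 * c ≤ p ^ 2 - 2 * e ^ 2) (h2 : p ^ 2 * S ≤ 4 * e ^ 2) :
    c ≤ 1 - S / 2 := by
  nlinarith [mul_pos hp hp]

lemma arccos_anti {x y : ℝ} (h : x ≤ y) : Real.arccos y ≤ Real.arccos x := by
  unfold Real.arccos
  have := Real.monotone_arcsin h
  linarith

/-- If `k ≥ √n` and `k ≥ π √n / ε`, unit vectors in the same hypercube cell of
the `k`-partition form an angle at most `ε`. -/
theorem angle_le_eps_of_sameCell (ε : ℝ) (hε : 0 < ε) (n k : ℕ)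
    (hn : 1 ≤ n) (hk : 1 ≤ k)
    (hkn : Real.sqrt n ≤ (k : ℝ)) (hke : Real.pi * Real.sqrt n / ε ≤ (k : ℝ))
    (u v : Fin n → ℝ) (hu : norm2 u = 1) (hv : norm2 v = 1)
    (hcell : sameCell n k u v) :
    vangle u v ≤ ε := by
  have hk0 : (0:ℝ) < k := by exact_mod_cast hk
  -- coordinatewise bound
  have hcoord : ∀ i : Fin n, (u i - v i) ^ 2 ≤ (2 / k) ^ 2 := by
    intro i
    obtain ⟨c, -, ⟨hu1, hu2⟩, hv1, hv2⟩ := hcell i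
    have h1 : u i - v i ≤ 2 / k := by
      have : (-1 + 2 * ((c : ℝ) + 1) / k) - (-1 + 2 * (c:ℝ) / k) = 2 / k := by
        field_simp; ring
      linarith
    have h2 : -(2 / k) ≤ u i - v i := by
      have : (-1 + 2 * ((c : ℝ) + 1) / k) - (-1 + 2 * (c:ℝ) / k) = 2 / k := by
        field_simp; ring
      linarith
    exact sq_le_sq' h2 h1
  have hs : (∑ i, (u i - v i) ^ 2) ≤ (n : ℝ) * (2 / k) ^ 2 := by
    calc (∑ i, (u i - v i) ^ 2) ≤ ∑ _i : Fin n, ((2:ℝ) / k) ^ 2 :=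
          Finset.sum_le_sum fun i _ => hcoord i
      _ = (n : ℝ) * (2 / k) ^ 2 := by
          rw [Finset.sum_const]; simp [mul_comm]
  -- norms
  have hsum_u : (∑ i, u i ^ 2) = 1 := by
    have h0 : (0:ℝ) ≤ ∑ i, u i ^ 2 := Finset.sum_nonneg fun i _ => sq_nonneg _
    have := hu
    unfold norm2 at this
    nlinarith [Real.sq_sqrt h0, this]
  have hsum_v : (∑ i, v i ^ 2) = 1 := by
    have h0 : (0:ℝ) ≤ ∑ i, v i ^ 2 := Finset.sum_nonneg fun i _ => sq_nonneg _
    have := hv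
    unfold norm2 at this
    nlinarith [Real.sq_sqrt h0, this]
  -- inner product identity
  have hinner : (∑ i, u i * v i) = 1 - (∑ i, (u i - v i) ^ 2) / 2 := by
    have key : (∑ i, (u i - v i) ^ 2)
        = ∑ i, (u i ^ 2 - 2 * (u i * v i) + v i ^ 2) :=
      Finset.sum_congr rfl fun i _ => by ring
    rw [key, Finset.sum_add_distrib, Finset.sum_sub_distrib, ← Finset.mul_sum,
      hsum_u, hsum_v]
    ring
  have hvangle : vangle u v = Real.arccos (∑ i, u i * v i) := by
    unfold vangle
    rw [hu, hv]; simp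
  rw [hvangle]
  rcases le_or_gt ε Real.pi with hεπ | hεπ
  · -- main case: ε ≤ π
    have hπ := Real.pi_pos
    have hns : Real.sqrt n ^ 2 = (n:ℝ) := Real.sq_sqrt (by positivity)
    have hπn : Real.pi * Real.sqrt n ≤ (k:ℝ) * ε := by
      rw [div_le_iff₀ hε] at hke; linarith
    have hsq : Real.pi ^ 2 * ((n : ℝ) * (2 / k) ^ 2) ≤ 4 * ε ^ 2 := by
      have h2 : Real.pi ^ 2 * (n:ℝ) ≤ (k:ℝ)^2 * ε^2 := by
        nlinarith [mul_le_mul hπn hπn (by positivity : (0:ℝ) ≤ Real.pi * Real.sqrt n)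
          (by positivity : (0:ℝ) ≤ (k:ℝ) * ε), hns]
      have e1 : Real.pi ^ 2 * ((n : ℝ) * (2 / k) ^ 2)
          = 4 * (Real.pi ^ 2 * (n:ℝ)) / (k:ℝ)^2 := by
        field_simp; ring
      rw [e1, div_le_iff₀ (by positivity : (0:ℝ) < (k:ℝ)^2)]
      nlinarith
    have h1 : Real.cos ε ≤ 1 - 2 / Real.pi ^ 2 * ε ^ 2 :=
      Real.cos_le_one_sub_mul_cos_sq (by rw [abs_of_pos hε]; exact hεπ)
    have h1' : Real.pi ^ 2 * Real.cos ε ≤ Real.pi ^ 2 - 2 * ε ^ 2 := by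
      have hπ2 : (0:ℝ) < Real.pi ^ 2 := by positivity
      have := mul_le_mul_of_nonneg_left h1 hπ2.le
      calc Real.pi ^ 2 * Real.cos ε ≤ Real.pi ^ 2 * (1 - 2 / Real.pi ^ 2 * ε ^ 2) := this
        _ = Real.pi ^ 2 - 2 * ε ^ 2 := by field_simp
    have hS4 : Real.pi ^ 2 * (∑ i, (u i - v i) ^ 2) ≤ 4 * ε ^ 2 :=
      le_trans (mul_le_mul_of_nonneg_left hs (by positivity)) hsq
    have hcos : Real.cos ε ≤ ∑ i, u i * v i := by
      rw [hinner]
      exact cos_bound_aux hπ h1' hS4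
    calc Real.arccos (∑ i, u i * v i) ≤ Real.arccos (Real.cos ε) := arccos_anti hcos
      _ = ε := Real.arccos_cos hε.le hεπ
  · exact le_trans (Real.arccos_le_pi _) hεπ.le
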